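/- arXiv:1310.4543 — 2 statements merged into one kernel-verified Lean document; each statement's English description precedes it below -/
import Mathlib

section
/- Let Π : ℝ → ℝ³ be a differentiable curve, 𝕀 a symmetric positive-definite real 3×3 matrix, Ω(t) := 𝕀⁻¹Π(t), and θ ∈ ℝ. Suppose Π satisfies the energy-dissipative (Landau–Lifshitz) rigid body equation Π'(t) + Ω(t) × Π(t) = θ Π(t) × (Π(t) × Ω(t)) for all t. Then for all t, the energy decays at the rate (d/dt)(½ Π(t)·𝕀⁻¹Π(t)) = − θ |Ω(t) × Π(t)|². -/
/-! Since 𝕀⁻¹ is symmetric, the energy changes at the rate Π'·Ω. In the equation for Π', the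
conservative term Ω × Π is orthogonal to Ω, and cyclically permuting the triple product turns the
dissipative term into (Π × (Π × Ω))·Ω = (Π × Ω)·(Ω × Π) = −|Ω × Π|². -/

open Matrix

section

variable {ι : Type*} [Fintype ι] {f g : ℝ → ι → ℝ} {f' g' : ι → ℝ} {t : ℝ}

theorem HasDerivAt.dotProduct (hf : HasDerivAt f f' t) (hg : HasDerivAt g g' t) :
    HasDerivAt (fun s => f s ⬝ᵥ g s) (f' ⬝ᵥ g t + f t ⬝ᵥ g') t := by
  simp only [_root_.dotProduct, ← Finset.sum_add_distrib]
  exact HasDerivAt.fun_sum fun i _ =>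
    (hasDerivAt_pi.mp hf i).mul (hasDerivAt_pi.mp hg i)

theorem HasDerivAt.mulVec (A : Matrix ι ι ℝ) (hf : HasDerivAt f f' t) :
    HasDerivAt (fun s => A *ᵥ f s) (A *ᵥ f') t :=
  (Matrix.mulVecLin A).toContinuousLinearMap.hasFDerivAt.comp_hasDerivAt t hf

theorem Matrix.IsSymm.hasDerivAt_half_dotProduct_mulVec {A : Matrix ι ι ℝ} (hA : A.IsSymm)
    (hf : HasDerivAt f f' t) :
    HasDerivAt (fun s => 1 / 2 * (f s ⬝ᵥ A *ᵥ f s)) (f' ⬝ᵥ A *ᵥ f t) t := by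
  refine ((hf.dotProduct (hf.mulVec A)).const_mul (1 / 2)).congr_deriv ?_
  rw [dotProduct_mulVec, ← mulVec_transpose, hA.eq, dotProduct_comm]
  ring

end

theorem smul_cross_cross_sub_cross_dotProduct {R : Type*} [CommRing R] (θ : R) (p w : Fin 3 → R) :
    (θ • (p ⨯₃ (p ⨯₃ w)) - w ⨯₃ p) ⬝ᵥ w = -(θ * (w ⨯₃ p ⬝ᵥ w ⨯₃ p)) := by
  have h : p ⨯₃ (p ⨯₃ w) ⬝ᵥ w = -(w ⨯₃ p ⬝ᵥ w ⨯₃ p) := by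
    rw [dotProduct_comm, triple_product_permutation, triple_product_permutation,
      ← cross_anticomm w p, neg_dotProduct]
  rw [sub_dotProduct, smul_dotProduct, h, dotProduct_comm (w ⨯₃ p) w, dot_self_cross, smul_eq_mul,
    sub_zero, mul_neg]

/-- A solution `Π` of the energy-dissipative (Landau–Lifshitz) rigid body
equation `Π' + Ω × Π = θ Π × (Π × Ω)`, with `Ω = 𝕀⁻¹Π`, dissipates the energy `½ Π·𝕀⁻¹Π`
at the rate `d/dt (½ Π·𝕀⁻¹Π) = − θ |Ω × Π|²`. -/
theorem statement13
    (I : Matrix (Fin 3) (Fin 3) ℝ) (hI : I.PosDef) (θ : ℝ)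
    (P : ℝ → Fin 3 → ℝ) (Ω : ℝ → Fin 3 → ℝ)
    (hΩ : ∀ t : ℝ, Ω t = I⁻¹.mulVec (P t))
    (P' : ℝ → Fin 3 → ℝ)
    (hP : ∀ t : ℝ, HasDerivAt P (P' t) t)
    (heq : ∀ t : ℝ, P' t + (Ω t ⨯₃ P t) = θ • (P t ⨯₃ (P t ⨯₃ Ω t))) :
    ∀ t : ℝ,
      HasDerivAt (fun s => (1 / 2) * (P s ⬝ᵥ I⁻¹.mulVec (P s)))
        (-(θ * ((Ω t ⨯₃ P t) ⬝ᵥ (Ω t ⨯₃ P t)))) t := by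
  intro t
  have hsymm : I⁻¹.IsSymm := (isHermitian_iff_isSymm.mp hI.isHermitian).inv
  have hP' : P' t = θ • (P t ⨯₃ (P t ⨯₃ Ω t)) - Ω t ⨯₃ P t := eq_sub_of_add_eq (heq t)
  have hE := hsymm.hasDerivAt_half_dotProduct_mulVec (hP t)
  rwa [← hΩ t, hP', smul_cross_cross_sub_cross_dotProduct] at hE
end

section
/- Let ψ, B : ℝ³ → ℝ be smooth (C^∞) functions of (t, x, y), 1-periodic in x and in y, let θ ∈ ℝ, and set ω := −Δψ and B̃ := B + θ{ψ, B}. Suppose the modified equations for 2D incompressible MHD with magnetic field normal to the plane (Casimir C = ½∫B², K = Id) hold at every point: ∂_t ω + {ω, ψ} + {B̃, B} = 0 and ∂_t B + {B̃, ψ} = 0. Then for every t ∈ ℝ, the magnetic energy decays as: the function t ↦ ½ ∫_{[0,1]²} B(t, x, y)² dx dy is differentiable with derivative − θ ∫_{[0,1]²} {ψ, B}(t, x, y)² dx dy. -/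
open MeasureTheory

/-- Partial derivative in the time variable `t` of a function of `(t, x, y)`. -/
noncomputable def pdt (f : ℝ × ℝ × ℝ → ℝ) (p : ℝ × ℝ × ℝ) : ℝ :=
  deriv (fun s => f (s, p.2.1, p.2.2)) p.1

/-- Partial derivative in the first spatial variable `x`. -/
noncomputable def pdx (f : ℝ × ℝ × ℝ → ℝ) (p : ℝ × ℝ × ℝ) : ℝ :=
  deriv (fun s => f (p.1, s, p.2.2)) p.2.1

/-- Partial derivative in the second spatial variable `y`. -/
noncomputable def pdy (f : ℝ × ℝ × ℝ → ℝ) (p : ℝ × ℝ × ℝ) : ℝ :=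
  deriv (fun s => f (p.1, p.2.1, s)) p.2.2

/-- The canonical (Jacobian) bracket `{f, g} = ∂ₓf ∂_y g − ∂_y f ∂ₓ g` in the spatial
variables. -/
noncomputable def jacBracket (f g : ℝ × ℝ × ℝ → ℝ) (p : ℝ × ℝ × ℝ) : ℝ :=
  pdx f p * pdy g p - pdy f p * pdx g p

/-- The spatial Laplacian `Δ = ∂ₓ² + ∂_y²`. -/
noncomputable def spatialLap (f : ℝ × ℝ × ℝ → ℝ) (p : ℝ × ℝ × ℝ) : ℝ :=
  pdx (pdx f) p + pdy (pdy f) p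

/-!
Differentiating under the integral sign, `d/dt ½∫B² = ∫ B ∂ₜB = -∫ B {B̃, ψ}`. With
`c = {ψ, B}`, the Leibniz rule and `c {B, ψ} = -c²` give the pointwise identity
`2B {B + θc, ψ} = {B² + 2θBc, ψ} + 2θc²`. On the torus every bracket integrates to zero, since
`{u, v} = ∂ₓ(u ∂_y v) - ∂_y(u ∂ₓ v)` and a derivative of a periodic function has zero mean
along its period; so only `-θ∫c²` survives.
-/

open Set Function

section SliceDerivatives

variable {f g : ℝ × ℝ × ℝ → ℝ} {p : ℝ × ℝ × ℝ}

lemma hasDerivAt_pdt (hf : DifferentiableAt ℝ f p) :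
    HasDerivAt (fun s => f (s, p.2.1, p.2.2)) (pdt f p) p.1 :=
  (hf.comp p.1 (by fun_prop : DifferentiableAt ℝ (fun s : ℝ => (s, p.2.1, p.2.2)) p.1)).hasDerivAt

lemma hasDerivAt_pdx (hf : DifferentiableAt ℝ f p) :
    HasDerivAt (fun s => f (p.1, s, p.2.2)) (pdx f p) p.2.1 :=
  (hf.comp p.2.1 (by fun_prop : DifferentiableAt ℝ (fun s : ℝ => (p.1, s, p.2.2)) p.2.1)).hasDerivAt

lemma hasDerivAt_pdy (hf : DifferentiableAt ℝ f p) :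
    HasDerivAt (fun s => f (p.1, p.2.1, s)) (pdy f p) p.2.2 :=
  (hf.comp p.2.2 (by fun_prop : DifferentiableAt ℝ (fun s : ℝ => (p.1, p.2.1, s)) p.2.2)).hasDerivAt

lemma pdt_eq_fderiv (hf : DifferentiableAt ℝ f p) : pdt f p = fderiv ℝ f p (1, 0, 0) :=
  (hf.hasFDerivAt.comp_hasDerivAt p.1 ((hasDerivAt_id _).prodMk
    ((hasDerivAt_const _ _).prodMk (hasDerivAt_const _ _)))).deriv

lemma pdx_eq_fderiv (hf : DifferentiableAt ℝ f p) : pdx f p = fderiv ℝ f p (0, 1, 0) :=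
  (hf.hasFDerivAt.comp_hasDerivAt p.2.1 ((hasDerivAt_const _ _).prodMk
    ((hasDerivAt_id _).prodMk (hasDerivAt_const _ _)))).deriv

lemma pdy_eq_fderiv (hf : DifferentiableAt ℝ f p) : pdy f p = fderiv ℝ f p (0, 0, 1) :=
  (hf.hasFDerivAt.comp_hasDerivAt p.2.2 ((hasDerivAt_const _ _).prodMk
    ((hasDerivAt_const _ _).prodMk (hasDerivAt_id _)))).deriv

variable {n : WithTop ℕ∞}

lemma contDiff_fderiv_apply (hf : ContDiff ℝ (n + 1) f) (v : ℝ × ℝ × ℝ) :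
    ContDiff ℝ n (fun q => fderiv ℝ f q v) :=
  (hf.fderiv_right le_rfl).clm_apply contDiff_const

lemma contDiff_pdt (hf : ContDiff ℝ (n + 1) f) : ContDiff ℝ n (pdt f) := by
  rw [show pdt f = fun q => fderiv ℝ f q (1, 0, 0) from
    funext fun q => pdt_eq_fderiv (hf.differentiable (by simp) q)]
  exact contDiff_fderiv_apply hf _

lemma contDiff_pdx (hf : ContDiff ℝ (n + 1) f) : ContDiff ℝ n (pdx f) := by
  rw [show pdx f = fun q => fderiv ℝ f q (0, 1, 0) from
    funext fun q => pdx_eq_fderiv (hf.differentiable (by simp) q)]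
  exact contDiff_fderiv_apply hf _

lemma contDiff_pdy (hf : ContDiff ℝ (n + 1) f) : ContDiff ℝ n (pdy f) := by
  rw [show pdy f = fun q => fderiv ℝ f q (0, 0, 1) from
    funext fun q => pdy_eq_fderiv (hf.differentiable (by simp) q)]
  exact contDiff_fderiv_apply hf _

lemma continuous_pdt (hf : ContDiff ℝ 1 f) : Continuous (pdt f) :=
  (contDiff_pdt (n := 0) (by rwa [zero_add])).continuous

lemma continuous_pdx (hf : ContDiff ℝ 1 f) : Continuous (pdx f) :=
  (contDiff_pdx (n := 0) (by rwa [zero_add])).continuous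

lemma continuous_pdy (hf : ContDiff ℝ 1 f) : Continuous (pdy f) :=
  (contDiff_pdy (n := 0) (by rwa [zero_add])).continuous

lemma contDiff_jacBracket (hf : ContDiff ℝ (n + 1) f) (hg : ContDiff ℝ (n + 1) g) :
    ContDiff ℝ n (jacBracket f g) :=
  ((contDiff_pdx hf).mul (contDiff_pdy hg)).sub ((contDiff_pdy hf).mul (contDiff_pdx hg))

lemma pdx_mul (hf : DifferentiableAt ℝ f p) (hg : DifferentiableAt ℝ g p) :
    pdx (fun q => f q * g q) p = pdx f p * g p + f p * pdx g p :=
  ((hasDerivAt_pdx hf).mul (hasDerivAt_pdx hg)).deriv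

lemma pdy_mul (hf : DifferentiableAt ℝ f p) (hg : DifferentiableAt ℝ g p) :
    pdy (fun q => f q * g q) p = pdy f p * g p + f p * pdy g p :=
  ((hasDerivAt_pdy hf).mul (hasDerivAt_pdy hg)).deriv

lemma pdx_pdy_comm (hf : ContDiff ℝ 2 f) : pdx (pdy f) p = pdy (pdx f) p := by
  have hdf : Differentiable ℝ (fderiv ℝ f) := (hf.fderiv_right (m := 1) le_rfl).differentiable
    one_ne_zero
  have hsecond (v w : ℝ × ℝ × ℝ) :
      fderiv ℝ (fun q => fderiv ℝ f q w) p v = fderiv ℝ (fderiv ℝ f) p v w := by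
    rw [fderiv_clm_apply (hdf p) (differentiableAt_const w)]
    simp
  rw [show pdy f = fun q => fderiv ℝ f q (0, 0, 1) from
      funext fun q => pdy_eq_fderiv (hf.differentiable two_ne_zero q),
    show pdx f = fun q => fderiv ℝ f q (0, 1, 0) from
      funext fun q => pdx_eq_fderiv (hf.differentiable two_ne_zero q),
    pdx_eq_fderiv (contDiff_fderiv_apply hf _ |>.differentiable one_ne_zero p),
    pdy_eq_fderiv (contDiff_fderiv_apply hf _ |>.differentiable one_ne_zero p),
    hsecond, hsecond, hf.contDiffAt.isSymmSndFDerivAt (by simp)]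

end SliceDerivatives

section Periodicity

variable {f g : ℝ × ℝ × ℝ → ℝ} {c : ℝ × ℝ × ℝ}

lemma Function.Periodic.pdx (hf : Periodic f c) : Periodic (pdx f) c := by
  intro p
  simp only [_root_.pdx, Prod.fst_add, Prod.snd_add, ← deriv_comp_add_const]
  congr 1
  funext s
  exact hf (p.1, s, p.2.2)

lemma Function.Periodic.pdy (hf : Periodic f c) : Periodic (pdy f) c := by
  intro p
  simp only [_root_.pdy, Prod.fst_add, Prod.snd_add, ← deriv_comp_add_const]
  congr 1
  funext s
  exact hf (p.1, p.2.1, s)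

lemma Function.Periodic.jacBracket (hf : Periodic f c) (hg : Periodic g c) :
    Periodic (jacBracket f g) c := fun p => by
  simp only [_root_.jacBracket, hf.pdx p, hf.pdy p, hg.pdx p, hg.pdy p]

lemma periodic_x_of_forall {f : ℝ × ℝ × ℝ → ℝ} {L : ℝ}
    (h : ∀ t x y : ℝ, f (t, x + L, y) = f (t, x, y)) : Periodic f (0, L, 0) :=
  fun ⟨t, x, y⟩ => by simpa using h t x y

lemma periodic_y_of_forall {f : ℝ × ℝ × ℝ → ℝ} {L : ℝ}
    (h : ∀ t x y : ℝ, f (t, x, y + L) = f (t, x, y)) : Periodic f (0, 0, L) :=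
  fun ⟨t, x, y⟩ => by simpa using h t x y

end Periodicity

section Integrals

variable {f u v : ℝ × ℝ × ℝ → ℝ}

lemma Continuous.integrableOn_slice {g : ℝ × ℝ × ℝ → ℝ} (hg : Continuous g) {K : Set (ℝ × ℝ)}
    (hK : IsCompact K) (t : ℝ) : IntegrableOn (fun q : ℝ × ℝ => g (t, q.1, q.2)) K :=
  (hg.comp (by fun_prop)).continuousOn.integrableOn_compact hK

lemma setIntegral_Icc_prod_Icc {g : ℝ × ℝ → ℝ} (hg : Continuous g) {a b c d : ℝ} (hab : a ≤ b)
    (hcd : c ≤ d) : ∫ q in Icc a b ×ˢ Icc c d, g q = ∫ x in a..b, ∫ y in c..d, g (x, y) := by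
  rw [Measure.volume_eq_prod, setIntegral_prod _
    (hg.continuousOn.integrableOn_compact (isCompact_Icc.prod isCompact_Icc)),
    intervalIntegral.integral_of_le hab, ← integral_Icc_eq_integral_Ioc]
  simp only [intervalIntegral.integral_of_le hcd, integral_Icc_eq_integral_Ioc]

lemma setIntegral_Icc_prod_Icc_swap {g : ℝ × ℝ → ℝ} (hg : Continuous g) {a b c d : ℝ}
    (hab : a ≤ b) (hcd : c ≤ d) :
    ∫ q in Icc a b ×ˢ Icc c d, g q = ∫ y in c..d, ∫ x in a..b, g (x, y) := by
  rw [Measure.volume_eq_prod, ← setIntegral_prod_swap, ← Measure.volume_eq_prod]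
  exact setIntegral_Icc_prod_Icc (g := fun q => g q.swap) (hg.comp continuous_swap) hcd hab

lemma intervalIntegral_pdx_eq_zero (hf : ContDiff ℝ 1 f) {L : ℝ} (hper : Periodic f (0, L, 0))
    (t y : ℝ) : ∫ x in 0..L, pdx f (t, x, y) = 0 := by
  have hcont : Continuous fun x => pdx f (t, x, y) := (continuous_pdx hf).comp (by fun_prop)
  rw [intervalIntegral.integral_eq_sub_of_hasDerivAt (f := fun x => f (t, x, y))
    (fun x _ => hasDerivAt_pdx (p := (t, x, y)) (hf.differentiable one_ne_zero _))
    (hcont.intervalIntegrable _ _)]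
  simpa [sub_eq_zero] using hper (t, 0, y)

lemma intervalIntegral_pdy_eq_zero (hf : ContDiff ℝ 1 f) {L : ℝ} (hper : Periodic f (0, 0, L))
    (t x : ℝ) : ∫ y in 0..L, pdy f (t, x, y) = 0 := by
  have hcont : Continuous fun y => pdy f (t, x, y) := (continuous_pdy hf).comp (by fun_prop)
  rw [intervalIntegral.integral_eq_sub_of_hasDerivAt (f := fun y => f (t, x, y))
    (fun y _ => hasDerivAt_pdy (p := (t, x, y)) (hf.differentiable one_ne_zero _))
    (hcont.intervalIntegrable _ _)]
  simpa [sub_eq_zero] using hper (t, x, 0)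

lemma setIntegral_pdx_eq_zero (hf : ContDiff ℝ 1 f) {L : ℝ} (hL : 0 ≤ L)
    (hper : Periodic f (0, L, 0)) {c d : ℝ} (hcd : c ≤ d) (t : ℝ) :
    ∫ q in Icc 0 L ×ˢ Icc c d, pdx f (t, q.1, q.2) = 0 := by
  rw [setIntegral_Icc_prod_Icc_swap (g := fun q => pdx f (t, q.1, q.2))
    ((continuous_pdx hf).comp (by fun_prop)) hL hcd]
  simp [intervalIntegral_pdx_eq_zero hf hper]

lemma setIntegral_pdy_eq_zero (hf : ContDiff ℝ 1 f) {L : ℝ} (hL : 0 ≤ L)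
    (hper : Periodic f (0, 0, L)) {a b : ℝ} (hab : a ≤ b) (t : ℝ) :
    ∫ q in Icc a b ×ˢ Icc 0 L, pdy f (t, q.1, q.2) = 0 := by
  rw [setIntegral_Icc_prod_Icc (g := fun q => pdy f (t, q.1, q.2))
    ((continuous_pdy hf).comp (by fun_prop)) hab hL]
  simp [intervalIntegral_pdy_eq_zero hf hper]

lemma jacBracket_eq_pdx_sub_pdy {p : ℝ × ℝ × ℝ} (hu : DifferentiableAt ℝ u p)
    (hv : ContDiff ℝ 2 v) :
    jacBracket u v p = pdx (fun q => u q * pdy v q) p - pdy (fun q => u q * pdx v q) p := by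
  rw [pdx_mul hu ((contDiff_pdy (n := 1) hv).differentiable one_ne_zero p),
    pdy_mul hu ((contDiff_pdx (n := 1) hv).differentiable one_ne_zero p), pdx_pdy_comm hv,
    jacBracket]
  ring

theorem setIntegral_jacBracket_eq_zero (hu : ContDiff ℝ 1 u) (hv : ContDiff ℝ 2 v) {L M : ℝ}
    (hL : 0 ≤ L) (hM : 0 ≤ M) (hux : Periodic u (0, L, 0)) (huy : Periodic u (0, 0, M))
    (hvx : Periodic v (0, L, 0)) (hvy : Periodic v (0, 0, M)) (t : ℝ) :
    ∫ q in Icc 0 L ×ˢ Icc 0 M, jacBracket u v (t, q.1, q.2) = 0 := by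
  have hP : ContDiff ℝ 1 (fun q => u q * pdy v q) := hu.mul (contDiff_pdy hv)
  have hR : ContDiff ℝ 1 (fun q => u q * pdx v q) := hu.mul (contDiff_pdx hv)
  have hK : IsCompact (Icc 0 L ×ˢ Icc 0 M) := isCompact_Icc.prod isCompact_Icc
  simp_rw [jacBracket_eq_pdx_sub_pdy (hu.differentiable one_ne_zero _) hv]
  rw [integral_sub ((continuous_pdx hP).integrableOn_slice hK t)
      ((continuous_pdy hR).integrableOn_slice hK t),
    setIntegral_pdx_eq_zero hP hL (hux.mul hvx.pdy) hM,
    setIntegral_pdy_eq_zero hR hM (huy.mul hvy.pdx) hL, sub_self]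

theorem hasDerivAt_setIntegral_of_contDiff {F : ℝ × ℝ × ℝ → ℝ} (hF : ContDiff ℝ 1 F)
    {K : Set (ℝ × ℝ)} (hK : IsCompact K) (t : ℝ) :
    HasDerivAt (fun s => ∫ q in K, F (s, q.1, q.2)) (∫ q in K, pdt F (t, q.1, q.2)) t := by
  obtain ⟨C, hC⟩ :=
    ((isCompact_Icc (a := t - 1) (b := t + 1)).prod hK).exists_bound_of_continuousOn
    (f := fun z : ℝ × ℝ × ℝ => pdt F (z.1, z.2.1, z.2.2)) (continuous_pdt hF).continuousOn
  have hbound : ∀ᵐ q ∂volume.restrict K, ∀ s ∈ Metric.ball t 1, ‖pdt F (s, q.1, q.2)‖ ≤ C := by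
    refine ae_restrict_of_forall_mem hK.isClosed.measurableSet fun q hq s hs => hC (s, q) ⟨?_, hq⟩
    rw [Metric.mem_ball, Real.dist_eq, abs_lt] at hs
    constructor <;> linarith
  exact (hasDerivAt_integral_of_dominated_loc_of_deriv_le (Metric.ball_mem_nhds t one_pos)
    (.of_forall fun s => (hF.continuous.integrableOn_slice hK s).aestronglyMeasurable)
    (hF.continuous.integrableOn_slice hK t)
    ((continuous_pdt hF).integrableOn_slice hK t).aestronglyMeasurable hbound
    (integrableOn_const hK.measure_lt_top.ne)
    (.of_forall fun q s _ => hasDerivAt_pdt (p := (s, q.1, q.2))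
      (hF.differentiable one_ne_zero _))).2

end Integrals

lemma pdt_sq_eq_of_transport {B ψ : ℝ × ℝ × ℝ → ℝ} {θ : ℝ} {p : ℝ × ℝ × ℝ}
    (hB : DifferentiableAt ℝ B p) (hc : DifferentiableAt ℝ (jacBracket ψ B) p)
    (hBt : pdt B p + jacBracket (fun q => B q + θ * jacBracket ψ B q) ψ p = 0) :
    pdt (fun q => B q ^ 2) p =
      -jacBracket (fun q => B q ^ 2 + 2 * θ * (B q * jacBracket ψ B q)) ψ p
        - 2 * θ * jacBracket ψ B p ^ 2 := by
  set c := jacBracket ψ B with hc_def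
  have hBx := hasDerivAt_pdx hB
  have hBy := hasDerivAt_pdy hB
  have hcx := hasDerivAt_pdx hc
  have hcy := hasDerivAt_pdy hc
  have ht : pdt (fun q => B q ^ 2) p = 2 * B p * pdt B p :=
    ((hasDerivAt_pdt hB).pow 2).deriv.trans (by simp)
  have hBtx : pdx (fun q => B q + θ * c q) p = pdx B p + θ * pdx c p :=
    (hBx.add (hcx.const_mul θ)).deriv
  have hBty : pdy (fun q => B q + θ * c q) p = pdy B p + θ * pdy c p :=
    (hBy.add (hcy.const_mul θ)).deriv
  have hGx : pdx (fun q => B q ^ 2 + 2 * θ * (B q * c q)) p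
      = 2 * B p * pdx B p + 2 * θ * (pdx B p * c p + B p * pdx c p) :=
    ((hBx.pow 2).add ((hBx.mul hcx).const_mul (2 * θ))).deriv.trans (by simp)
  have hGy : pdy (fun q => B q ^ 2 + 2 * θ * (B q * c q)) p
      = 2 * B p * pdy B p + 2 * θ * (pdy B p * c p + B p * pdy c p) :=
    ((hBy.pow 2).add ((hBy.mul hcy).const_mul (2 * θ))).deriv.trans (by simp)
  rw [jacBracket] at hBt ⊢
  rw [hBtx, hBty] at hBt
  rw [ht, hGx, hGy, hc_def, jacBracket]
  linear_combination (2 * B p) * hBt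

theorem setIntegral_pdt_sq_eq_of_transport {ψ B : ℝ × ℝ × ℝ → ℝ} {θ L M : ℝ}
    (hψ : ContDiff ℝ 2 ψ) (hB : ContDiff ℝ 2 B) (hL : 0 ≤ L) (hM : 0 ≤ M)
    (hψx : Periodic ψ (0, L, 0)) (hψy : Periodic ψ (0, 0, M)) (hBx : Periodic B (0, L, 0))
    (hBy : Periodic B (0, 0, M))
    (hBt : ∀ p, pdt B p + jacBracket (fun q => B q + θ * jacBracket ψ B q) ψ p = 0) (t : ℝ) :
    ∫ q in Icc 0 L ×ˢ Icc 0 M, pdt (fun q => B q ^ 2) (t, q.1, q.2)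
      = -(2 * θ * ∫ q in Icc 0 L ×ˢ Icc 0 M, jacBracket ψ B (t, q.1, q.2) ^ 2) := by
  have hB1 : ContDiff ℝ 1 B := hB.of_le (by norm_num)
  have hc : ContDiff ℝ 1 (jacBracket ψ B) := contDiff_jacBracket hψ hB
  have hcx : Periodic (jacBracket ψ B) (0, L, 0) := hψx.jacBracket hBx
  have hcy : Periodic (jacBracket ψ B) (0, 0, M) := hψy.jacBracket hBy
  set G := fun q => B q ^ 2 + 2 * θ * (B q * jacBracket ψ B q)
  have hG : ContDiff ℝ 1 G := (hB1.pow 2).add (contDiff_const.mul (hB1.mul hc))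
  have hGx : Periodic G (0, L, 0) := fun p => by simp only [G, hBx p, hcx p]
  have hGy : Periodic G (0, 0, M) := fun p => by simp only [G, hBy p, hcy p]
  have hK : IsCompact (Icc 0 L ×ˢ Icc 0 M) := isCompact_Icc.prod isCompact_Icc
  simp_rw [pdt_sq_eq_of_transport (hB1.differentiable one_ne_zero _)
    (hc.differentiable one_ne_zero _) (hBt _)]
  rw [integral_sub
      (Continuous.integrableOn_slice (g := fun p => -jacBracket G ψ p)
        (contDiff_jacBracket (n := 0) hG (hψ.of_le (by norm_num))).continuous.neg hK t)
      (Continuous.integrableOn_slice (g := fun p => 2 * θ * jacBracket ψ B p ^ 2)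
        (by fun_prop) hK t),
    integral_neg, setIntegral_jacBracket_eq_zero hG hψ hL hM hGx hGy hψx hψy,
    integral_const_mul]
  ring

theorem hasDerivAt_magneticEnergy {ψ B : ℝ × ℝ × ℝ → ℝ} {θ L M : ℝ} (hψ : ContDiff ℝ 2 ψ)
    (hB : ContDiff ℝ 2 B) (hL : 0 ≤ L) (hM : 0 ≤ M) (hψx : Periodic ψ (0, L, 0))
    (hψy : Periodic ψ (0, 0, M)) (hBx : Periodic B (0, L, 0)) (hBy : Periodic B (0, 0, M))
    (hBt : ∀ p, pdt B p + jacBracket (fun q => B q + θ * jacBracket ψ B q) ψ p = 0) (t : ℝ) :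
    HasDerivAt (fun s => 1 / 2 * ∫ q in Icc 0 L ×ˢ Icc 0 M, B (s, q.1, q.2) ^ 2)
      (-(θ * ∫ q in Icc 0 L ×ˢ Icc 0 M, jacBracket ψ B (t, q.1, q.2) ^ 2)) t := by
  have hderiv := hasDerivAt_setIntegral_of_contDiff ((hB.of_le (by norm_num)).pow 2)
    (isCompact_Icc.prod isCompact_Icc : IsCompact (Icc 0 L ×ˢ Icc 0 M)) t
  rw [setIntegral_pdt_sq_eq_of_transport hψ hB hL hM hψx hψy hBx hBy hBt] at hderiv
  exact (hderiv.const_mul (1 / 2)).congr_deriv (by ring)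

theorem statement18_general
    (ψ B : ℝ × ℝ × ℝ → ℝ) (θ : ℝ)
    (hψ : ContDiff ℝ (⊤ : ℕ∞) ψ) (hB : ContDiff ℝ (⊤ : ℕ∞) B)
    (hψx : ∀ t x y : ℝ, ψ (t, x + 1, y) = ψ (t, x, y))
    (hψy : ∀ t x y : ℝ, ψ (t, x, y + 1) = ψ (t, x, y))
    (hBx : ∀ t x y : ℝ, B (t, x + 1, y) = B (t, x, y))
    (hBy : ∀ t x y : ℝ, B (t, x, y + 1) = B (t, x, y))
    (Btil : ℝ × ℝ × ℝ → ℝ)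
    (hBtil : Btil = fun p => B p + θ * jacBracket ψ B p)
    (heq2 : ∀ p : ℝ × ℝ × ℝ, pdt B p + jacBracket Btil ψ p = 0) :
    ∀ t : ℝ,
      HasDerivAt
        (fun s => (1 / 2) *
          ∫ q in Set.Icc (0 : ℝ) 1 ×ˢ Set.Icc (0 : ℝ) 1, (B (s, q.1, q.2)) ^ 2)
        (-(θ * ∫ q in Set.Icc (0 : ℝ) 1 ×ˢ Set.Icc (0 : ℝ) 1,
            (jacBracket ψ B (t, q.1, q.2)) ^ 2)) t := by
  subst hBtil
  have hsmooth : (2 : WithTop ℕ∞) ≤ (⊤ : ℕ∞) := WithTop.coe_le_coe.2 le_top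
  exact hasDerivAt_magneticEnergy (hψ.of_le hsmooth) (hB.of_le hsmooth) zero_le_one zero_le_one
    (periodic_x_of_forall hψx) (periodic_y_of_forall hψy) (periodic_x_of_forall hBx)
    (periodic_y_of_forall hBy) heq2

/-- For smooth, spatially `1`-periodic solutions of the modified 2D
incompressible MHD equations with `𝐁 = B ẑ` normal to the plane and Casimir `½∫B²`
(K = Id): `∂ₜω + {ω, ψ} + {B̃, B} = 0`, `∂ₜB + {B̃, ψ} = 0`, where `ω = −Δψ` and
`B̃ = B + θ{ψ, B}`, the magnetic energy decays at the rate
`d/dt (½∫B²) = −θ ∫ {ψ, B}²` (integrals over the unit square). -/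
theorem statement18
    (ψ B : ℝ × ℝ × ℝ → ℝ) (θ : ℝ)
    (hψ : ContDiff ℝ (⊤ : ℕ∞) ψ) (hB : ContDiff ℝ (⊤ : ℕ∞) B)
    (hψx : ∀ t x y : ℝ, ψ (t, x + 1, y) = ψ (t, x, y))
    (hψy : ∀ t x y : ℝ, ψ (t, x, y + 1) = ψ (t, x, y))
    (hBx : ∀ t x y : ℝ, B (t, x + 1, y) = B (t, x, y))
    (hBy : ∀ t x y : ℝ, B (t, x, y + 1) = B (t, x, y))
    (ω Btil : ℝ × ℝ × ℝ → ℝ)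
    (hω : ω = fun p => -spatialLap ψ p)
    (hBtil : Btil = fun p => B p + θ * jacBracket ψ B p)
    (heq1 : ∀ p : ℝ × ℝ × ℝ, pdt ω p + jacBracket ω ψ p + jacBracket Btil B p = 0)
    (heq2 : ∀ p : ℝ × ℝ × ℝ, pdt B p + jacBracket Btil ψ p = 0) :
    ∀ t : ℝ,
      HasDerivAt
        (fun s => (1 / 2) *
          ∫ q in Set.Icc (0 : ℝ) 1 ×ˢ Set.Icc (0 : ℝ) 1, (B (s, q.1, q.2)) ^ 2)
        (-(θ * ∫ q in Set.Icc (0 : ℝ) 1 ×ˢ Set.Icc (0 : ℝ) 1,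
            (jacBracket ψ B (t, q.1, q.2)) ^ 2)) t :=
  statement18_general ψ B θ hψ hB hψx hψy hBx hBy Btil hBtil heq2
end
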